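/- Let s, t be integers with 1 ≤ s, t ≤ q−1 and s ≠ t, assume gcd(2k, q) = 1, (q−1)/k does not divide s−t, and v₂(s−t) ≠ v₂(q−1) − v₂(k) − 1, and let β = (γ^s·α_1, …, γ^s·α_k, γ^t·α_1, …, γ^t·α_k) ∈ F_q^{2k} (so n = 2k; its entries are pairwise distinct). If 2ℓ < k, or if k = 2ℓ and (k : F_q)·(γ^{sk} + γ^{tk}) + Σ_{i=1}^{ℓ} a_{1i}² ≠ 0 in F_q, then the GRL code GRL_k(β, A) is Euclidean LCD. -/

import Mathlib

open Matrix BigOperators Finset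

/-- Euclidean dual of a code `C ⊆ F^ι`. -/
def dualE {F : Type} [Field F] {ι : Type} [Fintype ι] (C : Submodule F (ι → F)) :
    Submodule F (ι → F) where
  carrier := {x | ∀ y ∈ C, ∑ i, x i * y i = 0}
  add_mem' := by
    intro a b ha hb y hy
    have h : ∑ i, (a + b) i * y i = (∑ i, a i * y i) + ∑ i, b i * y i := by
      rw [← Finset.sum_add_distrib]
      exact Finset.sum_congr rfl fun i _ => add_mul _ _ _
    rw [h, ha y hy, hb y hy, add_zero]
  zero_mem' := by intro y hy; simp
  smul_mem' := by
    intro c a ha y hy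
    have h : ∑ i, (c • a) i * y i = c * ∑ i, a i * y i := by
      rw [Finset.mul_sum]
      exact Finset.sum_congr rfl fun i _ => by
        simp [Pi.smul_apply, smul_eq_mul, mul_assoc]
    rw [h, ha y hy, mul_zero]

/-- Generator matrix of the generalized Roth–Lempel code: evaluation columns indexed by `ι`
(entry `β j ^ r`), extra columns indexed by `Fin ℓ` (zero for rows `r < k - ℓ`, and the
corresponding row of `A` for rows `k - ℓ ≤ r ≤ k - 1`). -/
def GRLmatrix {F : Type} [Field F] (k ℓ : ℕ) (hℓk : ℓ ≤ k) {ι : Type} (β : ι → F)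
    (A : Matrix (Fin ℓ) (Fin ℓ) F) : Matrix (Fin k) (ι ⊕ Fin ℓ) F :=
  fun r => Sum.elim (fun j => β j ^ (r : ℕ))
    (fun j' => if _h : (r : ℕ) < k - ℓ then 0
      else A ⟨(r : ℕ) - (k - ℓ), by have := r.isLt; omega⟩ j')

/-- The generalized Roth–Lempel code: the row span of `GRLmatrix`. -/
def GRLcode {F : Type} [Field F] (k ℓ : ℕ) (hℓk : ℓ ≤ k) {ι : Type} (β : ι → F)
    (A : Matrix (Fin ℓ) (Fin ℓ) F) : Submodule F ((ι ⊕ Fin ℓ) → F) :=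
  Submodule.span F (Set.range (GRLmatrix k ℓ hℓk β A))

/-!
A code is LCD as soon as its Gram matrix `G * Gᵀ` is nonsingular. For the GRL code the
`(r, r')` entry of the Gram matrix is the power sum `∑ⱼ βⱼ ^ (r + r')` plus a contribution of
the `ℓ` extra columns that lives in the lower-right `ℓ × ℓ` corner. Since the `βⱼ` are `γ^s` and
`γ^t` times the `k`-th roots of unity, the power sum of exponent `u` vanishes unless `k ∣ u`; it is
`2k` at `u = 0` and `k (γ^{sk} + γ^{tk})` at `u = k`, and the latter is nonzero because
`γ^{sk} = -γ^{tk}` would force `v₂((s - t) k) = v₂(q - 1) - 1`. Hence each column of the Hankel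
part has a single nonzero entry, and a vector in the left kernel of the Gram matrix is killed
coordinate by coordinate: the corner only meets coordinates already known to vanish when
`2ℓ < k`, and the extra hypothesis handles the middle coordinate when `k = 2ℓ`.
-/

theorem span_range_inf_dualE_eq_bot {F : Type} [Field F] {κ ι : Type} [Fintype κ] [Fintype ι]
    (G : Matrix κ ι F) (h : ∀ c : κ → F, c ᵥ* (G * Gᵀ) = 0 → c = 0) :
    Submodule.span F (Set.range G) ⊓ dualE (Submodule.span F (Set.range G)) = ⊥ := by
  rw [eq_bot_iff]
  rintro x ⟨hxC, hxD⟩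
  obtain ⟨c, rfl⟩ := (Submodule.mem_span_range_iff_exists_fun F).mp hxC
  have hx : ∑ i, c i • G i = c ᵥ* G := by
    ext j; simp [vecMul, dotProduct, Finset.sum_apply, mul_comm]
  have hxGt : (c ᵥ* G) ᵥ* Gᵀ = 0 := by
    ext r
    rw [← hx]
    simpa [vecMul, dotProduct] using hxD (G r) (Submodule.subset_span (Set.mem_range_self r))
  rw [hx, h c (by rw [← vecMul_vecMul, hxGt]), zero_vecMul]
  exact Submodule.zero_mem _

theorem natCast_ne_zero_of_coprime_card {R : Type} [CommRing R] [Nontrivial R] [Fintype R]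
    {n : ℕ} (h : n.Coprime (Fintype.card R)) : (n : R) ≠ 0 := by
  have := (Nat.isCoprime_iff_coprime.mpr h).map (Int.castRingHom R)
  simp only [eq_intCast, Int.cast_natCast, Nat.cast_card_eq_zero, isCoprime_zero_right] at this
  exact this.ne_zero

theorem padicValInt_add_one_of_dvd_prime_mul {p N : ℕ} [hp : Fact p.Prime] {x : ℤ}
    (hdvd : (N : ℤ) ∣ p * x) (hndvd : ¬ (N : ℤ) ∣ x) :
    padicValInt p x + 1 = padicValNat p N := by
  obtain ⟨m, hm⟩ := hdvd
  have hx : x ≠ 0 := by rintro rfl; exact hndvd (dvd_zero _)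
  have hp0 : (p : ℤ) ≠ 0 := by exact_mod_cast hp.out.ne_zero
  have hN : (N : ℤ) ≠ 0 := by rintro h; rw [h, zero_mul] at hm; exact mul_ne_zero hp0 hx hm
  have hm0 : m ≠ 0 := by rintro rfl; rw [mul_zero] at hm; exact mul_ne_zero hp0 hx hm
  have hpm : ¬ (p : ℤ) ∣ m := by
    rintro ⟨m', rfl⟩
    exact hndvd ⟨m', mul_left_cancel₀ hp0 (by rw [hm]; ring)⟩
  have := congrArg (padicValInt p) hm
  rw [padicValInt.mul hp0 hx, padicValInt.mul hN hm0, padicValInt.eq_zero_of_not_dvd hpm,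
    padicValInt_self, padicValInt.of_nat] at this
  omega

theorem IsPrimitiveRoot.padicValInt_two_add_one_of_pow_add_pow_eq_zero {F : Type} [Field F]
    {ζ : F} {N : ℕ} (hζ : IsPrimitiveRoot ζ N) (hN : N ≠ 0) (h2 : (2 : F) ≠ 0) {a b : ℕ}
    (h : ζ ^ a + ζ ^ b = 0) : padicValInt 2 ((a : ℤ) - b) + 1 = padicValNat 2 N := by
  have hζ0 : ζ ≠ 0 := hζ.ne_zero hN
  have hneg : ζ ^ ((a : ℤ) - b) = -1 := by
    rw [zpow_sub₀ hζ0, zpow_natCast, zpow_natCast, eq_neg_of_add_eq_zero_left h, neg_div,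
      div_self (pow_ne_zero _ hζ0)]
  have : Fact (Nat.Prime 2) := ⟨Nat.prime_two⟩
  refine padicValInt_add_one_of_dvd_prime_mul ?_ ?_
  · rw [← hζ.zpow_eq_one_iff_dvd, mul_comm, _root_.zpow_mul, hneg]
    norm_num
  · rw [← hζ.zpow_eq_one_iff_dvd, hneg]
    intro h1
    exact h2 (by linear_combination -h1)

theorem IsPrimitiveRoot.pow_mul_add_pow_mul_ne_zero {F : Type} [Field F] {ζ : F} {N k s t : ℕ}
    (hζ : IsPrimitiveRoot ζ N) (hN : N ≠ 0) (h2 : (2 : F) ≠ 0) (hk : k ≠ 0) (hst : s ≠ t)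
    (hv2 : (padicValNat 2 ((s : ℤ) - t).natAbs : ℤ) ≠ padicValNat 2 N - padicValNat 2 k - 1) :
    ζ ^ (s * k) + ζ ^ (t * k) ≠ 0 := by
  intro h
  have hv := hζ.padicValInt_two_add_one_of_pow_add_pow_eq_zero hN h2 h
  have : Fact (Nat.Prime 2) := ⟨Nat.prime_two⟩
  push_cast at hv
  rw [← sub_mul, padicValInt.mul (sub_ne_zero.mpr (by exact_mod_cast hst)) (by exact_mod_cast hk),
    padicValInt.of_nat] at hv
  exact hv2 (by unfold padicValInt at hv; omega)

theorem IsPrimitiveRoot.sum_pow_succ_pow {R : Type} [CommRing R] [IsDomain R] {ζ : R} {k : ℕ}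
    (hζ : IsPrimitiveRoot ζ k) (u : ℕ) :
    ∑ i : Fin k, (ζ ^ ((i : ℕ) + 1)) ^ u = if k ∣ u then (k : R) else 0 := by
  have hterm : ∀ i : ℕ, (ζ ^ (i + 1)) ^ u = ζ ^ u * (ζ ^ u) ^ i := fun i => by ring
  rw [Fin.sum_univ_eq_sum_range (fun i => (ζ ^ (i + 1)) ^ u)]
  simp only [hterm, ← mul_sum]
  split_ifs with hku
  · rw [(hζ.pow_eq_one_iff_dvd u).mpr hku]
    simp
  · have hne : ζ ^ u - 1 ≠ 0 := sub_ne_zero.mpr fun h => hku ((hζ.pow_eq_one_iff_dvd u).mp h)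
    have hgeom := geom_sum_mul (ζ ^ u) k
    rw [← pow_mul, mul_comm u, pow_mul, hζ.pow_eq_one, one_pow, sub_self] at hgeom
    rw [(mul_eq_zero.mp hgeom).resolve_right hne, mul_zero]

section GRLmatrix

variable {F : Type} [Field F] {k ℓ : ℕ} (hℓk : ℓ ≤ k) {ι : Type} (β : ι → F)
  (A : Matrix (Fin ℓ) (Fin ℓ) F)

theorem GRLmatrix_inr_of_lt {r : Fin k} (hr : (r : ℕ) < k - ℓ) (j : Fin ℓ) :
    GRLmatrix k ℓ hℓk β A r (Sum.inr j) = 0 := by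
  simp [GRLmatrix, hr]

theorem GRLmatrix_inr_of_le {r : Fin k} (hr : k - ℓ ≤ (r : ℕ)) (j : Fin ℓ) :
    GRLmatrix k ℓ hℓk β A r (Sum.inr j) = A ⟨r - (k - ℓ), by omega⟩ j := by
  simp [GRLmatrix, not_lt.mpr hr]

theorem GRLmatrix_mul_transpose_apply [Fintype ι] (r r' : Fin k) :
    (GRLmatrix k ℓ hℓk β A * (GRLmatrix k ℓ hℓk β A)ᵀ) r r' =
      ∑ j, β j ^ ((r : ℕ) + r') +
        ∑ j, GRLmatrix k ℓ hℓk β A r (Sum.inr j) * GRLmatrix k ℓ hℓk β A r' (Sum.inr j) := by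
  simp [mul_apply, Fintype.sum_sum_type, GRLmatrix, pow_add]

end GRLmatrix

theorem eq_zero_of_sum_mul_hankel_add_corner {F : Type} [Field F] {k ℓ : ℕ} (P : ℕ → F)
    (X : Matrix (Fin k) (Fin k) F) (hP : ∀ u, ¬ k ∣ u → P u = 0) (hP0 : P 0 ≠ 0)
    (hPk : P k ≠ 0) (hX : ∀ r r' : Fin k, (r : ℕ) < k - ℓ ∨ (r' : ℕ) < k - ℓ → X r r' = 0)
    (hcase : 2 * ℓ < k ∨ (k = 2 * ℓ ∧ ∀ r : Fin k, (r : ℕ) = ℓ → P k + X r r ≠ 0))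
    (c : Fin k → F) (hc : ∀ r' : Fin k, ∑ r, c r * (P (r + r') + X r r') = 0) : c = 0 := by
  have hcol : ∀ r₀ r' : Fin k, k ∣ r₀ + r' → c r₀ * P (r₀ + r') + ∑ r, c r * X r r' = 0 := by
    intro r₀ r' hr₀
    have := hc r'
    simp only [mul_add, sum_add_distrib] at this
    rwa [sum_eq_single r₀ (fun r _ hr => ?_) (by simp)] at this
    rw [hP _ fun hr' => hr ?_, mul_zero]
    exact Fin.ext <| (Nat.ModEq.add_right_cancel' _ <|
      (Nat.modEq_zero_iff_dvd.mpr hr').trans (Nat.modEq_zero_iff_dvd.mpr hr₀).symm).eq_of_lt_of_lt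
        r.2 r₀.2
  have hcompl : ∀ (r : Fin k) (hr : 0 < (r : ℕ)),
      c r * P k + ∑ x, c x * X x ⟨k - r, by omega⟩ = 0 := by
    intro r hr
    have := hcol r ⟨k - r, by omega⟩ (by simp [Nat.add_sub_cancel' r.2.le])
    simpa only [Nat.add_sub_cancel' r.2.le] using this
  have hXcol : ∀ r' : Fin k, (r' : ℕ) < k - ℓ → ∑ r, c r * X r r' = 0 :=
    fun r' hr' => sum_eq_zero fun r _ => by rw [hX r r' (Or.inr hr'), mul_zero]
  have hhigh : ∀ r : Fin k, ℓ < r → c r = 0 := by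
    intro r hr
    have := hcompl r (by omega)
    rw [hXcol _ (by simp; omega), add_zero] at this
    exact (mul_eq_zero.mp this).resolve_right hPk
  have hcorner : ∀ r : Fin k, k - ℓ ≤ r → c r = 0 := by
    intro r hr
    rcases hcase with hlt | ⟨rfl, hne⟩
    · exact hhigh r (by omega)
    rcases (show ℓ < r ∨ (r : ℕ) = ℓ by omega) with hr | hr
    · exact hhigh r hr
    have hdiag : ∑ x, c x * X x r = c r * X r r := by
      refine sum_eq_single r (fun x _ hx => ?_) (by simp)
      rcases (show (x : ℕ) < ℓ ∨ ℓ < x by omega) with hx' | hx'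
      · rw [hX x r (Or.inl (by omega)), mul_zero]
      · rw [hhigh x hx', zero_mul]
    have := hcol r r (by rw [hr, ← two_mul])
    rw [hdiag, show (r : ℕ) + r = 2 * ℓ by omega, ← mul_add] at this
    exact (mul_eq_zero.mp this).resolve_right (hne r hr)
  have hXzero : ∀ r' : Fin k, ∑ r, c r * X r r' = 0 := by
    refine fun r' => sum_eq_zero fun r _ => ?_
    rcases lt_or_ge (r : ℕ) (k - ℓ) with hr | hr
    · rw [hX r r' (Or.inl hr), mul_zero]
    · rw [hcorner r hr, zero_mul]
  funext r
  rcases Nat.eq_zero_or_pos r with hr | hr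
  · have := hcol r r (by simp [hr])
    rw [hXzero, add_zero, hr] at this
    exact (mul_eq_zero.mp this).resolve_right hP0
  · have := hcompl r hr
    rw [hXzero, add_zero] at this
    exact (mul_eq_zero.mp this).resolve_right hPk

theorem GRLcode_inf_dualE_eq_bot {F : Type} [Field F] {k ℓ : ℕ} (hℓ : 0 < ℓ) (hℓk : ℓ ≤ k)
    {ι : Type} [Fintype ι] (β : ι → F) (A : Matrix (Fin ℓ) (Fin ℓ) F)
    (hβ : ∀ u, ¬ k ∣ u → ∑ j, β j ^ u = 0) (hι : (Fintype.card ι : F) ≠ 0)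
    (hβk : ∑ j, β j ^ k ≠ 0)
    (hcase : 2 * ℓ < k ∨ (k = 2 * ℓ ∧ ∑ j, β j ^ k + ∑ i, A ⟨0, hℓ⟩ i ^ 2 ≠ 0)) :
    GRLcode k ℓ hℓk β A ⊓ dualE (GRLcode k ℓ hℓk β A) = ⊥ := by
  refine span_range_inf_dualE_eq_bot _ fun c hc => ?_
  refine eq_zero_of_sum_mul_hankel_add_corner (ℓ := ℓ) (fun u => ∑ j, β j ^ u)
    (fun r r' => ∑ j, GRLmatrix k ℓ hℓk β A r (Sum.inr j) * GRLmatrix k ℓ hℓk β A r' (Sum.inr j))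
    hβ (by simpa using hι) hβk ?_ ?_ c
    fun r' => by simpa [vecMul, dotProduct, GRLmatrix_mul_transpose_apply] using congrFun hc r'
  · rintro r r' (hr | hr') <;> refine sum_eq_zero fun j _ => ?_
    · rw [GRLmatrix_inr_of_lt hℓk β A hr, zero_mul]
    · rw [GRLmatrix_inr_of_lt hℓk β A hr', mul_zero]
  · refine hcase.imp_right fun ⟨hk, hne⟩ => ⟨hk, fun r hr => ?_⟩
    have hrow : ∀ j, GRLmatrix k ℓ hℓk β A r (Sum.inr j) = A ⟨0, hℓ⟩ j := fun j => by
      rw [GRLmatrix_inr_of_le hℓk β A (by omega)]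
      congr
      omega
    simpa [hrow, sq] using hne

/-- with `gcd(2k, q) = 1`, `(q-1)/k ∤ s - t`, `v₂(s-t) ≠ v₂(q-1) - v₂(k) - 1`
and `β = (γ^s·α_1, …, γ^s·α_k, γ^t·α_1, …, γ^t·α_k)`, if `2ℓ < k`, or `k = 2ℓ` and
`k·(γ^{sk} + γ^{tk}) + Σ a_{1i}² ≠ 0`, then the GRL code is Euclidean LCD. -/
theorem stmt6 {F : Type} [Field F] [Fintype F]
    (γ : Fˣ) (hγ : ∀ x : Fˣ, x ∈ Subgroup.zpowers γ)
    (k ℓ : ℕ) (hℓ2 : 2 ≤ ℓ) (hℓk : ℓ ≤ k) (hkdvd : k ∣ Fintype.card F - 1)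
    (A : Matrix (Fin ℓ) (Fin ℓ) F)
    (α : Fin k → F)
    (hα : ∀ i : Fin k, α i = (γ : F) ^ ((Fintype.card F - 1) / k * ((i : ℕ) + 1)))
    (s t : ℕ) (hst : s ≠ t)
    (hgcd : Nat.gcd (2 * k) (Fintype.card F) = 1)
    (hv2 : (padicValNat 2 ((s : ℤ) - (t : ℤ)).natAbs : ℤ) ≠
      (padicValNat 2 (Fintype.card F - 1) : ℤ) - (padicValNat 2 k : ℤ) - 1)
    (β : (Fin k ⊕ Fin k) → F)
    (hβ : β = Sum.elim (fun i : Fin k => (γ : F) ^ s * α i)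
      (fun i : Fin k => (γ : F) ^ t * α i))
    (hcase : 2 * ℓ < k ∨
      (k = 2 * ℓ ∧ (k : F) * ((γ : F) ^ (s * k) + (γ : F) ^ (t * k)) +
        ∑ i : Fin ℓ, A ⟨0, by omega⟩ i ^ 2 ≠ 0)) :
    GRLcode k ℓ hℓk β A ⊓ dualE (GRLcode k ℓ hℓk β A) = ⊥ := by
  have hγN : IsPrimitiveRoot (γ : F) (Fintype.card F - 1) := by
    rw [IsPrimitiveRoot.coe_units_iff, ← Nat.card_eq_fintype_card, ← Nat.card_units,
      ← orderOf_eq_card_of_forall_mem_zpowers hγ]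
    exact .orderOf γ
  set N := Fintype.card F - 1
  have hN : N ≠ 0 := by have := Fintype.one_lt_card (α := F); omega
  have hk : k ≠ 0 := by omega
  have hζ : IsPrimitiveRoot ((γ : F) ^ (N / k)) k := by
    simpa [Nat.div_div_self hkdvd hN] using
      hγN.pow_of_dvd (Nat.div_ne_zero_iff_of_dvd hkdvd |>.mpr ⟨hN, hk⟩) (Nat.div_dvd_of_dvd hkdvd)
  have h2k : ((2 * k : ℕ) : F) ≠ 0 := natCast_ne_zero_of_coprime_card hgcd
  push_cast at h2k
  obtain ⟨h2, hkF⟩ := mul_ne_zero_iff.mp h2k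
  have hpow : ∀ u, ∑ j, β j ^ u = ((γ : F) ^ (s * u) + (γ : F) ^ (t * u)) *
      if k ∣ u then (k : F) else 0 := by
    intro u
    have hα' : α = fun i : Fin k => ((γ : F) ^ (N / k)) ^ ((i : ℕ) + 1) :=
      funext fun i => by rw [hα, pow_mul]
    simp only [hβ, hα', Fintype.sum_sum_type, Sum.elim_inl, Sum.elim_inr, mul_pow, ← mul_sum,
      hζ.sum_pow_succ_pow, pow_mul, add_mul]
  have hsum := hγN.pow_mul_add_pow_mul_ne_zero hN h2 hk hst hv2
  refine GRLcode_inf_dualE_eq_bot (by omega) hℓk β A (fun u hu => by simp [hpow, hu])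
    (by simpa [two_mul] using h2k) (by simp [hpow, hkF, hsum]) ?_
  simpa [hpow, mul_comm] using hcase
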